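/- If (M, ⊣) is a commutative monoid and a₁, a₂ ∈ M, then the variants (M, ⊣_{a₁}) and (M, ⊣_{a₂}) (where x ⊣_a y = x ⊣ a ⊣ y) are strong interassociates of each other, i.e., x ⊣_{a₁} (y ⊣_{a₂} z) = x ⊣_{a₂} (y ⊣_{a₁} z) for all x, y, z, in addition to the two interassociativity axioms. -/

import Mathlib

theorem variant_mul_assoc {S : Type*} [Semigroup S] (a b x y z : S) :
    x * a * y * b * z = x * a * (y * b * z) := by
  simp only [mul_assoc]

theorem variant_mul_left_comm {S : Type*} [CommSemigroup S] (a b x y z : S) :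
    x * a * (y * b * z) = x * b * (y * a * z) := by
  ac_rfl

theorem variants_of_comm_monoid_strong_interassociates {M : Type*} [CommMonoid M]
    (a₁ a₂ : M) :
    (∀ x y z : M, (x * a₁ * y) * a₂ * z = x * a₁ * (y * a₂ * z)) ∧
    (∀ x y z : M, (x * a₂ * y) * a₁ * z = x * a₂ * (y * a₁ * z)) ∧
    (∀ x y z : M, x * a₁ * (y * a₂ * z) = x * a₂ * (y * a₁ * z)) :=
  ⟨variant_mul_assoc a₁ a₂, variant_mul_assoc a₂ a₁, variant_mul_left_comm a₁ a₂⟩
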